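/- Let β(ω) = (1+|ω|)^{-1}. There exist no ψ, φ ∈ L²(ℝ) such that both of the following hold: (a) the functions ξ ↦ ∫_ℝ |ψ̂(β(ω)(ξ−ω))|² β(ω) dω and ξ ↦ ∫_ℝ |φ̂(β(ω)(ξ−ω))|² β(ω) dω are essentially bounded on ℝ (i.e. both systems are Bessel), and (b) ∫_ℝ conj(ψ̂(β(ω)(ξ−ω))) φ̂(β(ω)(ξ−ω)) β(ω) dω = 1 for a.e. ξ ∈ ℝ. In other words, for the affine Weyl–Heisenberg system with η(ω) = ω, β(ω) = (1+|ω|)^{-1} and s = 1 there is no reproducing pair (Ψ,Φ) with Ψ and Φ Bessel whose resolution operator is the identity on L²(ℝ). -/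

import Mathlib

/-!
Put `g = conj ψ̂ · φ̂`, an integrable function. For `ω > 0` the substitution `t = β(ω)(ξ - ω)`
maps `(0, ∞)` onto the interval between `-1` and `ξ`, with `β(ω) dω = ± dt / (1 + t)`, and
`ω ↦ -ω` reduces `ω < 0` to this case. Hence the symbol is
`m(ξ) = ∫_{-1}^ξ g(t) / (1 + t) dt - ∫_1^ξ g(t) / (1 - t) dt`.
If `m = 1` a.e., evaluating at a point `≤ -2` and at a point `≥ 2` shows that both weighted
functions are integrable, so `m` is continuous, hence `m ≡ 1`. By Lebesgue differentiation its
derivative `(1 / (1 + t) - 1 / (1 - t)) g(t)` vanishes a.e., so `g = 0` a.e. and `m ≡ 0`.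
-/

open MeasureTheory ComplexConjugate
open scoped InnerProductSpace FourierTransform ENNReal

open Set Filter
open scoped Interval

namespace MeasureTheory

variable {E : Type*} [NormedAddCommGroup E] [NormedSpace ℝ E]

theorem LocallyIntegrable.ae_eq_zero_of_forall_intervalIntegral_eq_zero [CompleteSpace E]
    {f : ℝ → E} (hf : LocallyIntegrable f) (c : ℝ) (h : ∀ x, ∫ t in c..x, f t = 0) :
    f =ᵐ[volume] 0 := by
  filter_upwards [_root_.LocallyIntegrable.ae_hasDerivAt_integral hf] with x hx
  have hzero : HasDerivAt (fun x => ∫ t in c..x, f t) 0 x := by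
    simp only [h]
    exact hasDerivAt_const x 0
  exact (hx c).unique hzero

theorem Integrable.smul_of_intervalIntegrable {g : ℝ → E} (hg : Integrable g) {h : ℝ → ℝ}
    (hh : Measurable h) {a b C : ℝ} (hab : IntervalIntegrable (fun t => h t • g t) volume a b)
    (hC : ∀ t ∉ Ι a b, ‖h t‖ ≤ C) : Integrable (fun t => h t • g t) := by
  rw [← integrableOn_univ, ← union_compl_self (Ι a b)]
  refine hab.def'.union (hg.integrableOn.bdd_smul C hh.aestronglyMeasurable ?_)
  exact (ae_restrict_mem measurableSet_uIoc.compl).mono hC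

end MeasureTheory

variable {E : Type*} [NormedAddCommGroup E] [NormedSpace ℝ E]

/-- With `g = conj ψ̂ · φ̂` and `β(ω) = (1 + |ω|)⁻¹`, this is the integrand of the symbol
`m_{Ψ,Φ}(ξ)`. -/
noncomputable def symbolIntegrand (g : ℝ → E) (ξ ω : ℝ) : E :=
  (1 + |ω|)⁻¹ • g ((1 + |ω|)⁻¹ * (ξ - ω))

noncomputable def symbol (g : ℝ → E) (ξ : ℝ) : E :=
  ∫ ω, symbolIntegrand g ξ ω

namespace symbolIntegrand

variable {ξ : ℝ}

lemma one_add_inv_mul_sub {ω : ℝ} (hω : 1 + ω ≠ 0) :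
    1 + (1 + ω)⁻¹ * (ξ - ω) = (1 + ξ) / (1 + ω) := by
  field_simp
  ring

lemma hasDerivWithinAt_inv_mul_sub {ω : ℝ} (hω : ω ∈ Ioi 0) :
    HasDerivWithinAt (fun ω => (1 + ω)⁻¹ * (ξ - ω)) (-(1 + ξ) / (1 + ω) ^ 2) (Ioi 0) ω := by
  have hω : 1 + ω ≠ 0 := by rw [mem_Ioi] at hω; linarith
  have h := (((hasDerivAt_id' ω).const_add 1).fun_inv hω).fun_mul ((hasDerivAt_id' ω).const_sub ξ)
  refine (h.congr_deriv ?_).hasDerivWithinAt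
  field_simp
  ring

lemma injOn_inv_mul_sub (hξ : ξ ≠ -1) : InjOn (fun ω => (1 + ω)⁻¹ * (ξ - ω)) (Ioi 0) := by
  intro a (ha : 0 < a) b (hb : 0 < b) hab
  have h : (1 + ξ) / (1 + a) = (1 + ξ) / (1 + b) := by
    rw [← one_add_inv_mul_sub (by linarith), ← one_add_inv_mul_sub (by linarith)]
    exact congrArg (1 + ·) hab
  have h1ξ : 1 + ξ ≠ 0 := by contrapose! hξ; linarith
  rw [div_eq_div_iff (by linarith) (by linarith)] at h
  linarith [mul_left_cancel₀ h1ξ h]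

lemma image_inv_mul_sub_Ioi (hξ : ξ ≠ -1) :
    (fun ω => (1 + ω)⁻¹ * (ξ - ω)) '' Ioi 0 = Ioo (min (-1) ξ) (max (-1) ξ) := by
  ext t
  constructor
  · rintro ⟨ω, hω : 0 < ω, rfl⟩
    have h := one_add_inv_mul_sub (ξ := ξ) (ω := ω) (by linarith)
    rw [eq_div_iff (by linarith)] at h
    rcases lt_or_gt_of_ne hξ with hξ' | hξ'
    · rw [min_eq_right hξ'.le, max_eq_left hξ'.le]
      constructor <;> nlinarith
    · rw [min_eq_left hξ'.le, max_eq_right hξ'.le]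
      constructor <;> nlinarith
  · rintro ⟨hlo, hhi⟩
    have hpos : 0 < (ξ - t) / (1 + t) := by
      rcases le_total (-1) ξ with h | h
      · rw [min_eq_left h, max_eq_right h] at *
        exact div_pos (by linarith) (by linarith)
      · rw [min_eq_right h, max_eq_left h] at *
        exact div_pos_of_neg_of_neg (by linarith) (by linarith)
    have h1t : 1 + t ≠ 0 := by rintro h; simp [h] at hpos
    have h1ξ : 1 + ξ ≠ 0 := by contrapose! hξ; linarith
    have h1ω : 1 + (ξ - t) / (1 + t) = (1 + ξ) / (1 + t) := by field_simp; ring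
    refine ⟨(ξ - t) / (1 + t), hpos, ?_⟩
    simp only [h1ω]
    field_simp
    ring

/-- The sign is the orientation of `-1..ξ`, as in `intervalIntegral_eq_integral_uIoc`. -/
lemma abs_deriv_smul_eq (g : ℝ → E) (hξ : ξ ≠ -1) {ω : ℝ} (hω : ω ∈ Ioi 0) :
    |-(1 + ξ) / (1 + ω) ^ 2| • ((1 + (1 + ω)⁻¹ * (ξ - ω))⁻¹ • g ((1 + ω)⁻¹ * (ξ - ω)))
      = (if -1 ≤ ξ then 1 else -1 : ℝ) • symbolIntegrand g ξ ω := by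
  rw [mem_Ioi] at hω
  have h1ω : 0 < 1 + ω := by linarith
  have h1ξ : 1 + ξ ≠ 0 := by contrapose! hξ; linarith
  rw [one_add_inv_mul_sub h1ω.ne', symbolIntegrand, abs_of_pos hω, smul_smul, smul_smul]
  congr 1
  rw [abs_div, abs_neg, abs_of_pos (pow_pos h1ω 2)]
  split_ifs with h
  · rw [abs_of_pos (lt_of_le_of_ne (by linarith) h1ξ.symm)]
    field_simp
  · rw [abs_of_neg (by linarith)]
    field_simp

lemma integral_Ioi (g : ℝ → E) (hξ : ξ ≠ -1) :
    ∫ ω in Ioi 0, symbolIntegrand g ξ ω = ∫ t in -1..ξ, (1 + t)⁻¹ • g t := by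
  have h := integral_image_eq_integral_abs_deriv_smul measurableSet_Ioi
    (fun ω => hasDerivWithinAt_inv_mul_sub) (injOn_inv_mul_sub hξ) (fun t => (1 + t)⁻¹ • g t)
  rw [image_inv_mul_sub_Ioi hξ,
    setIntegral_congr_fun measurableSet_Ioi (fun ω => abs_deriv_smul_eq g hξ), integral_smul] at h
  rw [intervalIntegral.intervalIntegral_eq_integral_uIoc, uIoc, integral_Ioc_eq_integral_Ioo, h,
    smul_smul]
  split_ifs <;> norm_num

lemma intervalIntegrable_inv_one_add_smul {g : ℝ → E} (hξ : ξ ≠ -1)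
    (h : IntegrableOn (symbolIntegrand g ξ) (Ioi 0)) :
    IntervalIntegrable (fun t => (1 + t)⁻¹ • g t) volume (-1) ξ := by
  rw [intervalIntegrable_iff, uIoc, integrableOn_Ioc_iff_integrableOn_Ioo,
    ← image_inv_mul_sub_Ioi hξ, integrableOn_image_iff_integrableOn_abs_deriv_smul
      measurableSet_Ioi (fun ω => hasDerivWithinAt_inv_mul_sub) (injOn_inv_mul_sub hξ)]
  exact IntegrableOn.congr_fun (h.smul _) (fun ω hω => (abs_deriv_smul_eq g hξ hω).symm)
    measurableSet_Ioi

lemma apply_neg (g : ℝ → E) (ξ ω : ℝ) :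
    symbolIntegrand g ξ (-ω) = symbolIntegrand (fun t => g (-t)) (-ξ) ω := by
  simp only [symbolIntegrand, abs_neg]
  congr 2
  ring

lemma integral_Iic (g : ℝ → E) (hξ : ξ ≠ 1) :
    ∫ ω in Iic 0, symbolIntegrand g ξ ω = ∫ t in ξ..1, (1 - t)⁻¹ • g t := by
  rw [← neg_zero, ← integral_comp_neg_Ioi]
  simp only [apply_neg]
  rw [integral_Ioi _ (neg_injective.ne hξ)]
  simpa [sub_neg_eq_add] using
    intervalIntegral.integral_comp_neg (fun t => (1 - t)⁻¹ • g t) (a := -1) (b := -ξ)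

lemma intervalIntegrable_inv_one_sub_smul {g : ℝ → E} (hξ : ξ ≠ 1)
    (h : Integrable (symbolIntegrand g ξ)) :
    IntervalIntegrable (fun t => (1 - t)⁻¹ • g t) volume ξ 1 := by
  have h' := intervalIntegrable_inv_one_add_smul (neg_injective.ne hξ)
    (by simpa only [apply_neg] using h.comp_neg.integrableOn)
  rw [IntervalIntegrable.iff_comp_neg]
  simpa only [sub_neg_eq_add] using h'.symm

end symbolIntegrand

lemma symbol_eq_intervalIntegral_sub {g : ℝ → E} {ξ : ℝ} (h : Integrable (symbolIntegrand g ξ))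
    (hξ₁ : ξ ≠ -1) (hξ₂ : ξ ≠ 1) :
    symbol g ξ = (∫ t in -1..ξ, (1 + t)⁻¹ • g t) - ∫ t in 1..ξ, (1 - t)⁻¹ • g t := by
  rw [symbol, ← intervalIntegral.integral_Iic_add_Ioi h.integrableOn h.integrableOn,
    symbolIntegrand.integral_Iic g hξ₂, symbolIntegrand.integral_Ioi g hξ₁,
    intervalIntegral.integral_symm, add_comm, ← sub_eq_add_neg]

lemma integrable_inv_one_add_smul_and_inv_one_sub_smul {g : ℝ → E} (hg : Integrable g) {a b : ℝ}
    (ha : a ≤ -2) (hb : 2 ≤ b) (haI : Integrable (symbolIntegrand g a))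
    (hbI : Integrable (symbolIntegrand g b)) :
    Integrable (fun t => (1 + t)⁻¹ • g t) ∧ Integrable (fun t => (1 - t)⁻¹ • g t) := by
  have hfar : ∀ t ∉ Ι a b, 1 ≤ |1 + t| ∧ 1 ≤ |1 - t| := by
    intro t ht
    rw [uIoc_of_le (by linarith), mem_Ioc, not_and_or, not_lt, not_le] at ht
    constructor <;> rw [le_abs'] <;> rcases ht with ht | ht <;>
      first | (left; linarith) | (right; linarith)
  constructor
  · refine hg.smul_of_intervalIntegrable (C := 1) (by fun_prop) ?_
      fun t ht => by simpa using inv_le_one_of_one_le₀ (hfar t ht).1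
    exact (symbolIntegrand.intervalIntegrable_inv_one_add_smul (by linarith)
      haI.integrableOn).symm.trans
      (symbolIntegrand.intervalIntegrable_inv_one_add_smul (by linarith) hbI.integrableOn)
  · refine hg.smul_of_intervalIntegrable (C := 1) (by fun_prop) ?_
      fun t ht => by simpa using inv_le_one_of_one_le₀ (hfar t ht).2
    exact (symbolIntegrand.intervalIntegrable_inv_one_sub_smul (by linarith) haI).trans
      (symbolIntegrand.intervalIntegrable_inv_one_sub_smul (by linarith) hbI).symm

lemma ae_eq_zero_of_intervalIntegral_sub_ae_eq_const [CompleteSpace E] {g : ℝ → E}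
    (h₁ : Integrable (fun t => (1 + t)⁻¹ • g t)) (h₂ : Integrable (fun t => (1 - t)⁻¹ • g t))
    {c : E} (hc : ∀ᵐ ξ, (∫ t in -1..ξ, (1 + t)⁻¹ • g t) - ∫ t in 1..ξ, (1 - t)⁻¹ • g t = c) :
    g =ᵐ[volume] 0 := by
  set m : ℝ → E := fun ξ => (∫ t in -1..ξ, (1 + t)⁻¹ • g t) - ∫ t in 1..ξ, (1 - t)⁻¹ • g t
  have hm_cont : Continuous m := (h₁.continuous_primitive _).fun_sub (h₂.continuous_primitive _)
  have hm : ∀ ξ, m ξ = c := congrFun <| (hm_cont.ae_eq_iff_eq volume continuous_const).mp hc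
  have hw : (fun t => (1 + t)⁻¹ • g t - (1 - t)⁻¹ • g t) =ᵐ[volume] 0 := by
    refine LocallyIntegrable.ae_eq_zero_of_forall_intervalIntegral_eq_zero
      (h₁.sub h₂).locallyIntegrable 0 fun x => ?_
    rw [intervalIntegral.integral_sub h₁.intervalIntegrable h₂.intervalIntegrable,
      ← intervalIntegral.integral_interval_sub_left (a := -1) h₁.intervalIntegrable
        h₁.intervalIntegrable,
      ← intervalIntegral.integral_interval_sub_left (a := 1) h₂.intervalIntegrable
        h₂.intervalIntegrable, sub_sub_sub_comm]
    exact (congrArg₂ (· - ·) (hm x) (hm 0)).trans (sub_self c)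
  filter_upwards [hw, Measure.ae_ne volume 0] with t ht ht₀
  rw [Pi.zero_apply, ← sub_smul] at ht
  refine (smul_eq_zero.mp ht).resolve_left fun h => ht₀ ?_
  linarith [inv_inj.mp (sub_eq_zero.mp h)]

theorem eq_zero_of_symbol_ae_eq_const [CompleteSpace E] {g : ℝ → E} (hg : Integrable g) {c : E}
    (hc : ∀ᵐ ξ, symbol g ξ = c) : c = 0 := by
  by_contra hc0
  have hgood : ∀ᵐ ξ, Integrable (symbolIntegrand g ξ) ∧ symbol g ξ = c := by
    filter_upwards [hc] with ξ hξ
    refine ⟨?_, hξ⟩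
    by_contra hi
    exact hc0 (hξ.symm.trans (integral_undef hi))
  obtain ⟨a, ha : a < -2, haI, hac⟩ :=
    Measure.exists_mem_of_measure_ne_zero_of_ae (s := Iio (-2)) (by simp) (ae_restrict_of_ae hgood)
  obtain ⟨b, hb : 2 < b, hbI, -⟩ :=
    Measure.exists_mem_of_measure_ne_zero_of_ae (s := Ioi 2) (by simp) (ae_restrict_of_ae hgood)
  obtain ⟨h₁, h₂⟩ := integrable_inv_one_add_smul_and_inv_one_sub_smul hg ha.le hb.le haI hbI
  have hg0 : g =ᵐ[volume] 0 := by
    refine ae_eq_zero_of_intervalIntegral_sub_ae_eq_const h₁ h₂ (c := c) ?_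
    filter_upwards [hgood, Measure.ae_ne volume (-1), Measure.ae_ne volume 1] with ξ hξ hξ₁ hξ₂
    rw [← hξ.2, symbol_eq_intervalIntegral_sub hξ.1 hξ₁ hξ₂]
  have hzero : ∀ (w : ℝ → ℝ) (x y : ℝ), ∫ t in x..y, w t • g t = 0 := fun w x y =>
    intervalIntegral.integral_zero_ae (by filter_upwards [hg0] with t ht _; simp [ht])
  apply hc0
  rw [← hac, symbol_eq_intervalIntegral_sub haI (by linarith) (by linarith), hzero, hzero, sub_zero]

theorem stmt_18_general
    (F : Lp ℂ 2 (volume : Measure ℝ) ≃ₗᵢ[ℂ] Lp ℂ 2 (volume : Measure ℝ)) :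
    ¬ ∃ (ψ φ : ℝ → ℂ) (hψ : MemLp ψ 2 volume) (hφ : MemLp φ 2 volume)
        (ψhat φhat : ℝ → ℂ),
      (F (hψ.toLp ψ) : ℝ → ℂ) =ᵐ[volume] ψhat ∧
      (F (hφ.toLp φ) : ℝ → ℂ) =ᵐ[volume] φhat ∧
      (∃ BΨ : ℝ, ∀ᵐ ξ ∂(volume : Measure ℝ),
          (∫ ω : ℝ, ‖ψhat ((1 + |ω|)⁻¹ * (ξ - ω))‖ ^ 2 * (1 + |ω|)⁻¹) ≤ BΨ) ∧
      (∃ BΦ : ℝ, ∀ᵐ ξ ∂(volume : Measure ℝ),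
          (∫ ω : ℝ, ‖φhat ((1 + |ω|)⁻¹ * (ξ - ω))‖ ^ 2 * (1 + |ω|)⁻¹) ≤ BΦ) ∧
      (∀ᵐ ξ ∂(volume : Measure ℝ),
          (∫ ω : ℝ, conj (ψhat ((1 + |ω|)⁻¹ * (ξ - ω))) *
            φhat ((1 + |ω|)⁻¹ * (ξ - ω)) * (((1 + |ω|)⁻¹ : ℝ) : ℂ)) = 1) := by
  rintro ⟨ψ, φ, hψ, hφ, ψhat, φhat, hψhat, hφhat, -, -, hsymbol⟩
  have hψhat₂ : MemLp ψhat 2 := (Lp.memLp _).ae_eq hψhat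
  have hφhat₂ : MemLp φhat 2 := (Lp.memLp _).ae_eq hφhat
  have hg : Integrable (star ψhat * φhat) := hψhat₂.star.integrable_mul hφhat₂
  refine one_ne_zero (eq_zero_of_symbol_ae_eq_const hg ?_)
  filter_upwards [hsymbol] with ξ hξ
  rw [← hξ, symbol]
  congr 1 with ω
  rw [symbolIntegrand, Complex.real_smul, mul_comm]
  rfl

/-- (No Bessel reproducing pair with identity resolution operator for
the affine Weyl–Heisenberg system with `η(ω) = ω`, `β(ω) = (1+|ω|)⁻¹`, `s = 1`.)
With `F` the Fourier–Plancherel transform on `L²(ℝ)`, there are no `ψ, φ ∈ L²(ℝ)`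
(with Plancherel transform representatives `ψhat, φhat`) such that both systems are
Bessel, i.e. `ξ ↦ ∫ |ψhat(β(ω)(ξ-ω))|² β(ω) dω` and
`ξ ↦ ∫ |φhat(β(ω)(ξ-ω))|² β(ω) dω` are essentially bounded, and the symbol is
identically one: `∫ conj(ψhat(β(ω)(ξ-ω))) φhat(β(ω)(ξ-ω)) β(ω) dω = 1` for a.e. `ξ`;
i.e. no such reproducing pair has resolution operator the identity on `L²(ℝ)`. -/
theorem stmt_18
    (F : Lp ℂ 2 (volume : Measure ℝ) ≃ₗᵢ[ℂ] Lp ℂ 2 (volume : Measure ℝ))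
    (hF : ∀ (f : ℝ → ℂ) (hf1 : Integrable f volume) (hf2 : MemLp f 2 volume),
        (F (hf2.toLp f) : ℝ → ℂ) =ᵐ[volume] 𝓕 f) :
    ¬ ∃ (ψ φ : ℝ → ℂ) (hψ : MemLp ψ 2 volume) (hφ : MemLp φ 2 volume)
        (ψhat φhat : ℝ → ℂ),
      (F (hψ.toLp ψ) : ℝ → ℂ) =ᵐ[volume] ψhat ∧
      (F (hφ.toLp φ) : ℝ → ℂ) =ᵐ[volume] φhat ∧
      (∃ BΨ : ℝ, ∀ᵐ ξ ∂(volume : Measure ℝ),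
          (∫ ω : ℝ, ‖ψhat ((1 + |ω|)⁻¹ * (ξ - ω))‖ ^ 2 * (1 + |ω|)⁻¹) ≤ BΨ) ∧
      (∃ BΦ : ℝ, ∀ᵐ ξ ∂(volume : Measure ℝ),
          (∫ ω : ℝ, ‖φhat ((1 + |ω|)⁻¹ * (ξ - ω))‖ ^ 2 * (1 + |ω|)⁻¹) ≤ BΦ) ∧
      (∀ᵐ ξ ∂(volume : Measure ℝ),
          (∫ ω : ℝ, conj (ψhat ((1 + |ω|)⁻¹ * (ξ - ω))) *
            φhat ((1 + |ω|)⁻¹ * (ξ - ω)) * (((1 + |ω|)⁻¹ : ℝ) : ℂ)) = 1) :=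
  stmt_18_general F
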